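/- For every R with 0 < R < √(3/(8π)) such that (1/(1−(8π/3)R²))^{1/4} < 3/2, the function ρ̃ : [0,R] → ℝ defined by ρ̃(r) = (A(r) − 1)/(3 − 2A(r)), where A(r) = ((1−(8π/3)r²)/(1−(8π/3)R²))^{1/4}, satisfies ρ̃(R) = 0, ρ̃(r) ≥ 0 on [0,R], and solves the ordinary differential equation dρ̃/dr = −((1+2ρ̃(r))/(1−(8π/3)r²))·4πr·(ρ̃(r) + 1/3) for all r ∈ (0,R). -/

import Mathlib

open Real Set

noncomputable section

/-- `A(r) = ((1−(8π/3)r²)/(1−(8π/3)R²))^{1/4}`. -/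
def Afun (R r : ℝ) : ℝ :=
  ((1 - 8 * π / 3 * r ^ 2) / (1 - 8 * π / 3 * R ^ 2)) ^ ((1:ℝ) / 4)

/-- `ρ̃(r) = (A(r) − 1)/(3 − 2A(r))`. -/
def rhoTilde (R r : ℝ) : ℝ := (Afun R r - 1) / (3 - 2 * Afun R r)

/-! With `u(r) = 1 − (8π/3)r²`, the function `A = (u/u(R))^{1/4}` satisfies `A' = −(4π/3) r A / u`,
and the Möbius map `a ↦ (a − 1)/(3 − 2a)` has derivative `1/(3 − 2a)²`, so
`ρ̃' = −(4π/3) r A / (u (3 − 2A)²)`. The right-hand side of the equation collapses to the same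
expression because `1 + 2ρ̃ = 1/(3 − 2A)` and `ρ̃ + 1/3 = A/(3(3 − 2A))`. Since `A` decreases in `r²`
from `A(0) = u(R)^{-1/4} < 3/2` to `A(R) = 1`, the denominator `3 − 2A` stays positive and `ρ̃ ≥ 0`. -/

theorem HasDerivAt.sub_one_div_three_sub_two_mul {f : ℝ → ℝ} {f' x : ℝ} (hf : HasDerivAt f f' x)
    (hx : 3 - 2 * f x ≠ 0) :
    HasDerivAt (fun y => (f y - 1) / (3 - 2 * f y)) (f' / (3 - 2 * f x) ^ 2) x := by
  refine ((hf.sub_const 1).div ((hf.const_mul 2).const_sub 3) hx).congr_deriv ?_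
  ring

theorem tov_rhs_moebius_eq {a u : ℝ} (r : ℝ) (ha : 3 - 2 * a ≠ 0) (hu : u ≠ 0) :
    -((1 + 2 * ((a - 1) / (3 - 2 * a))) / u) * (4 * π * r) * ((a - 1) / (3 - 2 * a) + 1 / 3) =
      -(4 * π / 3) * r * a / u / (3 - 2 * a) ^ 2 := by
  field_simp
  ring

theorem one_sub_mul_sq_pos_of_lt_sqrt {R : ℝ} (hR : 0 < R) (hR2 : R < √(3 / (8 * π))) :
    0 < 1 - 8 * π / 3 * R ^ 2 := by
  have hRsq : R ^ 2 < 3 / (8 * π) := (lt_sqrt hR.le).mp hR2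
  rw [lt_div_iff₀ (by positivity)] at hRsq
  linarith

theorem Afun_self {R : ℝ} (hc : 1 - 8 * π / 3 * R ^ 2 ≠ 0) : Afun R R = 1 := by
  rw [Afun, div_self hc, one_rpow]

theorem Afun_zero (R : ℝ) : Afun R 0 = (1 / (1 - 8 * π / 3 * R ^ 2)) ^ ((1:ℝ) / 4) := by
  simp [Afun]

theorem Afun_le_Afun {R r s : ℝ} (hc : 0 < 1 - 8 * π / 3 * R ^ 2) (hrs : r ^ 2 ≤ s ^ 2)
    (hs : s ^ 2 ≤ R ^ 2) : Afun R s ≤ Afun R r := by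
  have hπ : 0 < π := pi_pos
  have hus : 0 ≤ 1 - 8 * π / 3 * s ^ 2 := by nlinarith
  refine rpow_le_rpow (div_nonneg hus hc.le) ?_ (by norm_num)
  gcongr

theorem hasDerivAt_Afun {R r : ℝ} (hc : 1 - 8 * π / 3 * R ^ 2 ≠ 0)
    (hu : 1 - 8 * π / 3 * r ^ 2 ≠ 0) :
    HasDerivAt (Afun R) (-(4 * π / 3) * r * Afun R r / (1 - 8 * π / 3 * r ^ 2)) r := by
  set c := 1 - 8 * π / 3 * R ^ 2
  set u := 1 - 8 * π / 3 * r ^ 2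
  have hbase : u / c ≠ 0 := div_ne_zero hu hc
  have hb : HasDerivAt (fun x : ℝ => (1 - 8 * π / 3 * x ^ 2) / c) (-(16 * π / 3) * r / c) r :=
    ((((hasDerivAt_pow 2 r).const_mul (8 * π / 3)).const_sub 1).div_const c).congr_deriv
      (by ring)
  refine (hb.rpow_const (p := 1 / 4) (Or.inl hbase)).congr_deriv ?_
  rw [rpow_sub_one hbase]
  change _ * _ * (Afun R r / _) = _
  field_simp
  ring

/-- The explicit function `ρ̃` solves the approximate TOV equation
`dρ̃/dr = −((1+2ρ̃)/(1−(8π/3)r²))·4πr·(ρ̃ + 1/3)` with `ρ̃(R) = 0` and `ρ̃ ≥ 0`. -/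
theorem stmt4 (R : ℝ) (hR : 0 < R) (hR2 : R < Real.sqrt (3 / (8 * π)))
    (hcond : (1 / (1 - 8 * π / 3 * R ^ 2)) ^ ((1:ℝ) / 4) < 3 / 2) :
    rhoTilde R R = 0 ∧
    (∀ r ∈ Icc (0:ℝ) R, 0 ≤ rhoTilde R r) ∧
    ∀ r ∈ Ioo (0:ℝ) R,
      HasDerivAt (rhoTilde R)
        (-((1 + 2 * rhoTilde R r) / (1 - 8 * π / 3 * r ^ 2)) * (4 * π * r) *
          (rhoTilde R r + 1 / 3)) r := by
  have hc := one_sub_mul_sq_pos_of_lt_sqrt hR hR2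
  rw [← Afun_zero] at hcond
  have hA_bounds : ∀ r ∈ Icc (0:ℝ) R, 1 ≤ Afun R r ∧ Afun R r < 3 / 2 := fun r hr =>
    have hr2 : r ^ 2 ≤ R ^ 2 := pow_le_pow_left₀ hr.1 hr.2 2
    ⟨Afun_self hc.ne' ▸ Afun_le_Afun hc hr2 le_rfl,
      (Afun_le_Afun hc (by simpa using sq_nonneg r) hr2).trans_lt hcond⟩
  refine ⟨by simp [rhoTilde, Afun_self hc.ne'], fun r hr => ?_, fun r hr => ?_⟩
  · obtain ⟨h1, h2⟩ := hA_bounds r hr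
    exact div_nonneg (by linarith) (by linarith)
  · obtain ⟨-, h2⟩ := hA_bounds r (Ioo_subset_Icc_self hr)
    have hu : 0 < 1 - 8 * π / 3 * r ^ 2 := by
      have : r ^ 2 < R ^ 2 := pow_lt_pow_left₀ hr.2 hr.1.le two_ne_zero
      nlinarith [pi_pos]
    have hden : 3 - 2 * Afun R r ≠ 0 := by linarith
    exact ((hasDerivAt_Afun hc.ne' hu.ne').sub_one_div_three_sub_two_mul hden).congr_deriv
      (tov_rhs_moebius_eq r hden hu.ne').symm
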